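/- arXiv:math/0305030 — 3 statements merged into one kernel-verified Lean document; each statement's English description precedes it below -/
import Mathlib

section
/- If H is a max-infinitely divisible distribution function on ℝ^d (i.e. H^s is a distribution function for every s > 0) and G is a probability distribution on (0,∞) with Laplace transform φ, then the function F(x) = ∫₀^∞ H(x)^s dG(s) satisfies F(x) = φ(-log H(x)) for all x with H(x) > 0, and F is a distribution function on ℝ^d. -/
open MeasureTheory

/-- `F` is a distribution function on `ℝ^d`. -/
def IsDistFun (d : ℕ) (F : (Fin d → ℝ) → ℝ) : Prop :=
  ∃ μ : Measure (Fin d → ℝ), IsProbabilityMeasure μ ∧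
    ∀ x, F x = (μ {y | ∀ i, y i ≤ x i}).toReal

/-! For `s > 0` let `ν s` be the probability measure with distribution function `H ^ s`.
The rectangles `Iic x` form a π-system generating the Borel σ-algebra of `ℝ^d`, so measurability
of `s ↦ H x ^ s` makes `s ↦ ν s` a measurable family, and the mixture `∫ ν s dG(s)` is a probability
measure whose distribution function is `F`. The formula `F = φ ∘ (-log H)` is just
`H x ^ s = exp (-(-log H x) * s)`. -/

open Set

lemma isCountablySpanning_range_Iic_real : IsCountablySpanning (range (Iic : ℝ → Set ℝ)) :=
  ⟨fun n => Iic (n : ℝ), fun _ => mem_range_self _,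
    eq_univ_of_forall fun x => mem_iUnion.2 ⟨⌈x⌉₊, Nat.le_ceil x⟩⟩

lemma MeasurableSpace.pi_eq_generateFrom_range_Iic {ι : Type*} [Finite ι] :
    (MeasurableSpace.pi : MeasurableSpace (ι → ℝ)) = generateFrom (range Iic) := by
  rw [← generateFrom_eq_pi (C := fun _ => range Iic)
    (fun _ => (borel_eq_generateFrom_Iic ℝ).symm.trans BorelSpace.measurable_eq.symm)
    fun _ => isCountablySpanning_range_Iic_real]
  congr 1
  ext s
  constructor
  · rintro ⟨t, ht, rfl⟩
    choose x hx using fun i => ht i (mem_univ i)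
    exact ⟨x, by simp only [← pi_univ_Iic, hx]⟩
  · rintro ⟨x, rfl⟩
    exact ⟨fun i => Iic (x i), fun i _ => mem_range_self _, pi_univ_Iic x⟩

lemma measurable_measure_of_measurable_Iic {α ι : Type*} [MeasurableSpace α] [Finite ι]
    {μ : α → Measure (ι → ℝ)} [∀ a, IsProbabilityMeasure (μ a)]
    (h : ∀ x, Measurable fun a => μ a (Iic x)) : Measurable μ :=
  .measure_of_isPiSystem_of_isProbabilityMeasure MeasurableSpace.pi_eq_generateFrom_range_Iic
    (fun _ ⟨x, hx⟩ _ ⟨y, hy⟩ _ => ⟨x ⊓ y, by rw [← hx, ← hy, Iic_inter_Iic]⟩)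
    (by rintro _ ⟨x, rfl⟩; exact h x)

namespace IsDistFun

variable {d : ℕ} {F : (Fin d → ℝ) → ℝ}

lemma nonneg (hF : IsDistFun d F) (x : Fin d → ℝ) : 0 ≤ F x := by
  obtain ⟨μ, -, hμ⟩ := hF
  exact hμ x ▸ ENNReal.toReal_nonneg

lemma le_one (hF : IsDistFun d F) (x : Fin d → ℝ) : F x ≤ 1 := by
  obtain ⟨μ, _, hμ⟩ := hF
  exact hμ x ▸ ENNReal.toReal_le_of_le_ofReal zero_le_one (by simpa using prob_le_one)

lemma integral {α : Type*} [MeasurableSpace α] (G : Measure α) [IsProbabilityMeasure G]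
    {K : α → (Fin d → ℝ) → ℝ} (hK : ∀ a, IsDistFun d (K a))
    (hmeas : ∀ x, Measurable fun a => K a x) : IsDistFun d fun x => ∫ a, K a x ∂G := by
  have hK_nonneg : ∀ a x, 0 ≤ K a x := fun a => (hK a).nonneg
  choose ν hν_prob hν using hK
  have hν_Iic : ∀ a x, ν a (Iic x) = ENNReal.ofReal (K a x) := fun a x => by
    rw [hν, ENNReal.ofReal_toReal (measure_ne_top _ _)]
    rfl
  have hν_meas : Measurable ν :=
    measurable_measure_of_measurable_Iic fun x => by
      simpa only [hν_Iic] using (hmeas x).ennreal_ofReal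
  refine ⟨G.bind ν, isProbabilityMeasure_bind hν_meas.aemeasurable (ae_of_all _ hν_prob),
    fun x => ?_⟩
  calc ∫ a, K a x ∂G = (∫⁻ a, ENNReal.ofReal (K a x) ∂G).toReal :=
        integral_eq_lintegral_of_nonneg_ae (ae_of_all _ fun a => hK_nonneg a x)
          (hmeas x).aestronglyMeasurable
    _ = (G.bind ν (Iic x)).toReal := by
        rw [Measure.bind_apply measurableSet_Iic hν_meas.aemeasurable]
        simp only [hν_Iic]

end IsDistFun

theorem mixture_of_MID_is_phi_of_neg_log_general
    (d : ℕ) (H : (Fin d → ℝ) → ℝ)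
    (hMID : ∀ s : ℝ, 0 < s → IsDistFun d (fun x => H x ^ s))
    (G : Measure ℝ) [IsProbabilityMeasure G] (hG : G (Set.Ioi (0:ℝ)) = 1)
    (φ : ℝ → ℝ)
    (hφ : ∀ v : ℝ, 0 ≤ v → φ v = ∫ s, Real.exp (-v * s) ∂G)
    (F : (Fin d → ℝ) → ℝ)
    (hF : ∀ x, F x = ∫ s, H x ^ s ∂G) :
    (∀ x, 0 < H x → F x = φ (-Real.log (H x))) ∧ IsDistFun d F := by
  have hH : IsDistFun d H := by simpa using hMID 1 one_pos
  have hG_pos : ∀ᵐ s ∂G, 0 < s := by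
    rwa [ae_iff_measure_eq measurableSet_Ioi.nullMeasurableSet, measure_univ]
  constructor
  · intro x hx
    rw [hF, hφ _ (neg_nonneg.2 (Real.log_nonpos (hH.nonneg x) (hH.le_one x)))]
    simp only [neg_neg, Real.rpow_def_of_pos hx]
  · -- `H ^ s` need not be a distribution function for `s ≤ 0`; there it is replaced by `H`.
    have hF_eq : F = fun x => ∫ s, H x ^ (if 0 < s then s else 1) ∂G :=
      funext fun x => (hF x).trans <| integral_congr_ae <| hG_pos.mono fun s hs => by simp [hs]
    rw [hF_eq]
    refine IsDistFun.integral G (fun s => ?_) fun x =>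
      measurable_const.pow (Measurable.ite measurableSet_Ioi measurable_id measurable_const)
    split_ifs with hs
    exacts [hMID s hs, by simpa using hH]

/-- If `H` is a max-infinitely divisible d.f. on `ℝ^d` (`H^s` is a d.f. for every `s > 0`)
and `G` is a probability measure on `(0,∞)` with Laplace transform `φ`, then
`F(x) = ∫ H(x)^s dG(s)` satisfies `F(x) = φ(-log H(x))` wherever `H(x) > 0`,
and `F` is a distribution function on `ℝ^d`. -/
theorem mixture_of_MID_is_phi_of_neg_log
    (d : ℕ) (hd : 2 ≤ d) (H : (Fin d → ℝ) → ℝ)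
    (hMID : ∀ s : ℝ, 0 < s → IsDistFun d (fun x => H x ^ s))
    (G : Measure ℝ) [IsProbabilityMeasure G] (hG : G (Set.Ioi (0:ℝ)) = 1)
    (φ : ℝ → ℝ)
    (hφ : ∀ v : ℝ, 0 ≤ v → φ v = ∫ s, Real.exp (-v * s) ∂G)
    (F : (Fin d → ℝ) → ℝ)
    (hF : ∀ x, F x = ∫ s, H x ^ s ∂G) :
    (∀ x, 0 < H x → F x = φ (-Real.log (H x))) ∧ IsDistFun d F :=
  mixture_of_MID_is_phi_of_neg_log_general d H hMID G hG φ hφ F hF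
end

section
/- Let U ≥ 0 be a random variable with Laplace transform φ, and for each θ > 0 let N_θ be the nonnegative-integer-valued random variable with PGF P_θ(s) = s^j φ((1−s^k)/θ), where j ≥ 0 and k ≥ 1 are fixed integers. Then θ·N_θ converges in distribution to k·U as θ → 0. -/
/-!
By uniqueness of probability generating functions on `(0, 1)`, `N_θ` has the law of `j + k M`,
where `M` is Poisson with the random rate `U / θ`. Given `U = u`, the variable `θ (j + k M)` has
mean `θ j + k u` and variance `θ k² u`, so it concentrates at `k u` as `θ → 0`; dominated
convergence in `U` then gives the limit.
-/

open MeasureTheory ProbabilityTheory Filter Topology Set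
open scoped NNReal BoundedContinuousFunction

lemma norm_mul_pow_le_abs {a s : ℝ} (hs : |s| ≤ 1) (n : ℕ) : ‖a * s ^ n‖ ≤ |a| := by
  rw [norm_mul, norm_pow, Real.norm_eq_abs, Real.norm_eq_abs]
  exact mul_le_of_le_one_right (abs_nonneg a) (pow_le_one₀ (abs_nonneg s) hs)

lemma tendsto_tsum_mul_pow_nhds_zero {a : ℕ → ℝ} (ha : Summable a) :
    Tendsto (fun s : ℝ => ∑' n, a n * s ^ n) (𝓝 0) (𝓝 (a 0)) := by
  have hzero : ∑' n, a n * (0 : ℝ) ^ n = a 0 := by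
    rw [tsum_eq_single 0 fun n hn => by simp [hn]]; simp
  rw [← hzero]
  refine tendsto_tsum_of_dominated_convergence ha.abs
    (fun n => ((continuous_pow n).const_mul (a n)).tendsto 0) ?_
  filter_upwards [Ioo_mem_nhds neg_one_lt_zero one_pos] with s hs n
  exact norm_mul_pow_le_abs (abs_le.2 ⟨hs.1.le, hs.2.le⟩) n

lemma eq_zero_of_tsum_mul_pow_eq_zero {a : ℕ → ℝ} (ha : Summable a)
    (h : ∀ s ∈ Ioo (0 : ℝ) 1, ∑' n, a n * s ^ n = 0) : a = 0 := by
  classical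
  by_contra hne
  have hex : ∃ n, a n ≠ 0 := Function.ne_iff.1 hne
  set m := Nat.find hex
  have hbelow : ∀ i < m, a i = 0 := fun i hi => not_not.1 (Nat.find_min hex hi)
  -- below `m` the series vanishes, so dividing by `s ^ m` leaves a series with constant term `a m`
  have htail : ∀ s ∈ Ioo (0 : ℝ) 1, ∑' n, a (n + m) * s ^ n = 0 := by
    intro s hs
    have hsum : Summable fun n => a n * s ^ n :=
      ha.abs.of_norm_bounded fun n => norm_mul_pow_le_abs ((abs_of_pos hs.1).trans_le hs.2.le) n
    have := hsum.sum_add_tsum_nat_add m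
    rw [Finset.sum_eq_zero fun i hi => by rw [hbelow i (Finset.mem_range.1 hi), zero_mul],
      zero_add, h s hs] at this
    simp_rw [pow_add, ← mul_assoc, tsum_mul_right] at this
    exact (mul_eq_zero.1 this).resolve_right (pow_ne_zero _ hs.1.ne')
  have hlim : Tendsto (fun s : ℝ => ∑' n, a (n + m) * s ^ n) (𝓝[>] 0) (𝓝 (a m)) := by
    simpa using (tendsto_tsum_mul_pow_nhds_zero ((summable_nat_add_iff m).2 ha)).mono_left
      nhdsWithin_le_nhds
  refine Nat.find_spec hex (tendsto_nhds_unique hlim (tendsto_const_nhds.congr' ?_))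
  filter_upwards [Ioo_mem_nhdsGT one_pos] with s hs using (htail s hs).symm

namespace MeasureTheory.Measure

lemma ext_of_integral_pow {μ ν : Measure ℕ} [IsFiniteMeasure μ] [IsFiniteMeasure ν]
    (h : ∀ s ∈ Ioo (0 : ℝ) 1, ∫ n, s ^ n ∂μ = ∫ n, s ^ n ∂ν) : μ = ν := by
  have hsum (μ : Measure ℕ) [IsFiniteMeasure μ] : Summable fun n => μ.real {n} :=
    summable_measure_toReal (fun _ => measurableSet_singleton _)
      fun _ _ hne => Set.disjoint_singleton.2 hne
  have hpgf (μ : Measure ℕ) [IsFiniteMeasure μ] (s : ℝ) (hs : s ∈ Ioo (0 : ℝ) 1) :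
      ∫ n, s ^ n ∂μ = ∑' n, μ.real {n} * s ^ n := by
    refine integral_countable (.of_bound (C := 1) .of_discrete (ae_of_all _ fun n => ?_))
    rw [norm_pow, Real.norm_eq_abs, abs_of_pos hs.1]
    exact pow_le_one₀ hs.1.le hs.2.le
  have hcoeff := eq_zero_of_tsum_mul_pow_eq_zero ((hsum μ).sub (hsum ν)) fun s hs => by
    have hs' : |s| ≤ 1 := (abs_of_pos hs.1).trans_le hs.2.le
    simp_rw [sub_mul]
    rw [Summable.tsum_sub ((hsum μ).abs.of_norm_bounded fun n => norm_mul_pow_le_abs hs' n)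
      ((hsum ν).abs.of_norm_bounded fun n => norm_mul_pow_le_abs hs' n), ← hpgf μ s hs,
      ← hpgf ν s hs, h s hs, sub_self]
  exact ext_iff_measureReal_singleton.2 fun n => sub_eq_zero.1 (congrFun hcoeff n)

lemma integral_comp {α β E : Type*} [MeasurableSpace α] [MeasurableSpace β]
    [NormedAddCommGroup E] [NormedSpace ℝ E] {κ : Kernel α β} {μ : Measure α} {f : β → E}
    (hf : Integrable f (κ ∘ₘ μ)) : ∫ y, f y ∂(κ ∘ₘ μ) = ∫ x, ∫ y, f y ∂κ x ∂μ := by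
  rw [Measure.comp_eq_comp_const_apply] at hf ⊢
  rw [Kernel.integral_comp hf, Kernel.const_apply]

end MeasureTheory.Measure

lemma BoundedContinuousFunction.abs_sub_le_add_mul_sq (f : ℝ →ᵇ ℝ) {c δ ε : ℝ} (hδ : 0 < δ)
    (hf : ∀ y, |y - c| < δ → |f y - f c| ≤ ε) (y : ℝ) :
    |f y - f c| ≤ ε + 2 * ‖f‖ / δ ^ 2 * (y - c) ^ 2 := by
  by_cases hy : |y - c| < δ
  · linarith [hf y hy, mul_nonneg (by positivity : 0 ≤ 2 * ‖f‖ / δ ^ 2) (sq_nonneg (y - c))]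
  · have hε : 0 ≤ ε := (abs_nonneg _).trans (hf c (by simpa using hδ))
    have hfar : 1 ≤ (y - c) ^ 2 / δ ^ 2 := by
      rw [one_le_div (by positivity), ← sq_abs (y - c)]
      exact pow_le_pow_left₀ hδ.le (not_lt.1 hy) 2
    calc |f y - f c| ≤ 2 * ‖f‖ := by rw [← Real.dist_eq]; exact f.dist_le_two_norm y c
      _ ≤ 2 * ‖f‖ * ((y - c) ^ 2 / δ ^ 2) := le_mul_of_one_le_right (by positivity) hfar
      _ = 2 * ‖f‖ / δ ^ 2 * (y - c) ^ 2 := by ring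
      _ ≤ ε + 2 * ‖f‖ / δ ^ 2 * (y - c) ^ 2 := le_add_of_nonneg_left hε

theorem tendsto_integral_comp_of_tendsto_integral_sq_sub {α ι : Type*} [MeasurableSpace α]
    {l : Filter ι} {μ : ι → Measure α} [∀ i, IsProbabilityMeasure (μ i)] {X : ι → α → ℝ} {c : ℝ}
    (hX : ∀ i, AEMeasurable (X i) (μ i))
    (hint : ∀ᶠ i in l, Integrable (fun a => (X i a - c) ^ 2) (μ i))
    (hlim : Tendsto (fun i => ∫ a, (X i a - c) ^ 2 ∂μ i) l (𝓝 0)) (f : ℝ →ᵇ ℝ) :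
    Tendsto (fun i => ∫ a, f (X i a) ∂μ i) l (𝓝 (f c)) := by
  rw [Metric.tendsto_nhds]
  intro ε hε
  obtain ⟨δ, hδ, hfδ⟩ := Metric.continuousAt_iff.1 f.continuous.continuousAt (ε / 2) (half_pos hε)
  have hnear : ∀ y, |y - c| < δ → |f y - f c| ≤ ε / 2 := fun y hy => by
    simpa only [Real.dist_eq] using (hfδ (x := y) (by rwa [Real.dist_eq])).le
  set K := 2 * ‖f‖ / δ ^ 2
  have hK : 0 ≤ K := by positivity
  filter_upwards [hint, hlim.eventually (gt_mem_nhds (by positivity : 0 < ε / 2 / (K + 1)))]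
    with i hi hsmall
  have hfX : Integrable (fun a => f (X i a)) (μ i) :=
    .of_bound (f.continuous.measurable.comp_aemeasurable (hX i)).aestronglyMeasurable ‖f‖
      (ae_of_all _ fun a => f.norm_coe_le_norm _)
  have hI : 0 ≤ ∫ a, (X i a - c) ^ 2 ∂μ i := integral_nonneg fun a => sq_nonneg _
  have hKI : K * ∫ a, (X i a - c) ^ 2 ∂μ i < ε / 2 := by
    calc K * ∫ a, (X i a - c) ^ 2 ∂μ i ≤ (K + 1) * ∫ a, (X i a - c) ^ 2 ∂μ i := by nlinarith
      _ < ε / 2 := by rwa [lt_div_iff₀' (by positivity)] at hsmall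
  rw [Real.dist_eq]
  calc |∫ a, f (X i a) ∂μ i - f c| = |∫ a, (f (X i a) - f c) ∂μ i| := by
        rw [integral_sub hfX (integrable_const _), integral_const, probReal_univ, one_smul]
    _ ≤ ∫ a, |f (X i a) - f c| ∂μ i := abs_integral_le_integral_abs
    _ ≤ ∫ a, (ε / 2 + K * (X i a - c) ^ 2) ∂μ i :=
        integral_mono (hfX.sub (integrable_const _)).abs ((integrable_const _).add (hi.const_mul K))
          fun a => f.abs_sub_le_add_mul_sq hδ hnear (X i a)
    _ = ε / 2 + K * ∫ a, (X i a - c) ^ 2 ∂μ i := by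
        rw [integral_add (integrable_const _) (hi.const_mul K), integral_const, probReal_univ,
          one_smul, integral_const_mul]
    _ < ε := by linarith

namespace ProbabilityTheory

open scoped Nat

lemma measurable_poissonMeasure : Measurable poissonMeasure := by
  refine Measure.measurable_of_measurable_coe _ fun s _ => ?_
  simp only [poissonMeasure, Measure.sum_apply _ (MeasurableSet.of_discrete), Measure.smul_apply,
    smul_eq_mul]
  exact Measurable.tsum fun n => (ENNReal.measurable_ofReal.comp (by fun_prop)).mul_const _

noncomputable def poissonKernel : Kernel ℝ≥0 ℕ := ⟨poissonMeasure, measurable_poissonMeasure⟩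

@[simp] lemma poissonKernel_apply (r : ℝ≥0) : poissonKernel r = poissonMeasure r := rfl

instance : IsMarkovKernel poissonKernel := ⟨fun r => by rw [poissonKernel_apply]; infer_instance⟩

lemma integral_pow_poissonMeasure (r : ℝ≥0) (t : ℝ) :
    ∫ n, t ^ n ∂poissonMeasure r = Real.exp (r * (t - 1)) := by
  rw [integral_poissonMeasure]
  calc ∑' n : ℕ, (Real.exp (-r) * r ^ n / n !) • t ^ n
      = Real.exp (-r) * ∑' n : ℕ, (r * t) ^ n / n ! := by
        rw [← tsum_mul_left]; congr 1 with n; rw [smul_eq_mul, mul_pow]; ring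
    _ = Real.exp (r * (t - 1)) := by
        rw [(NormedSpace.expSeries_div_hasSum_exp ((r : ℝ) * t)).tsum_eq, ← Real.exp_eq_exp_ℝ,
          ← Real.exp_add]
        ring_nf

lemma hasSum_descFactorial_poissonMeasure (r : ℝ≥0) (i : ℕ) :
    HasSum (fun n => Real.exp (-r) * r ^ n / n ! * n.descFactorial i) (r ^ i) := by
  rw [← hasSum_nat_add_iff' i, Finset.sum_eq_zero fun n hn => by
    rw [Nat.descFactorial_eq_zero_iff_lt.2 (Finset.mem_range.1 hn), Nat.cast_zero, mul_zero],
    sub_zero]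
  have hshift : (fun n => Real.exp (-r) * r ^ (n + i) / (n + i)! * ((n + i).descFactorial i : ℝ))
      = fun n => (r : ℝ) ^ i * (Real.exp (-r) * r ^ n / n !) := by
    ext n
    have hfact : ((n + i)! : ℝ) = n ! * (n + i).descFactorial i := by
      rw [← Nat.cast_mul, ← Nat.factorial_mul_descFactorial (Nat.le_add_left i n),
        Nat.add_sub_cancel]
    rw [hfact, pow_add]
    field_simp
  simpa [hshift] using (hasSum_one_poissonMeasure r).mul_left ((r : ℝ) ^ i)

lemma hasSum_add_mul_sq_poissonMeasure (r : ℝ≥0) (a b : ℝ) :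
    HasSum (fun n => Real.exp (-r) * r ^ n / n ! * (a + b * n) ^ 2)
      ((a + b * r) ^ 2 + b ^ 2 * r) := by
  have h := (((hasSum_descFactorial_poissonMeasure r 2).mul_left (b ^ 2)).add
    ((hasSum_descFactorial_poissonMeasure r 1).mul_left (b ^ 2 + 2 * a * b))).add
    ((hasSum_descFactorial_poissonMeasure r 0).mul_left (a ^ 2))
  have hterm : (fun n : ℕ => Real.exp (-r) * r ^ n / n ! * (a + b * n) ^ 2) = fun n =>
      b ^ 2 * (Real.exp (-r) * r ^ n / n ! * n.descFactorial 2)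
        + (b ^ 2 + 2 * a * b) * (Real.exp (-r) * r ^ n / n ! * n.descFactorial 1)
        + a ^ 2 * (Real.exp (-r) * r ^ n / n ! * n.descFactorial 0) := by
    ext n
    rw [Nat.cast_descFactorial_two, Nat.descFactorial_one, Nat.descFactorial_zero]
    push_cast
    ring
  rw [hterm, show (a + b * r) ^ 2 + b ^ 2 * r = b ^ 2 * r ^ 2 + (b ^ 2 + 2 * a * b) * r ^ 1
    + a ^ 2 * r ^ 0 by ring]
  exact h

lemma integrable_add_mul_sq_poissonMeasure (r : ℝ≥0) (a b : ℝ) :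
    Integrable (fun n : ℕ => (a + b * n) ^ 2) (poissonMeasure r) := by
  simpa [integrable_poissonMeasure_iff] using (hasSum_add_mul_sq_poissonMeasure r a b).summable

lemma integral_add_mul_sq_poissonMeasure (r : ℝ≥0) (a b : ℝ) :
    ∫ n : ℕ, (a + b * n) ^ 2 ∂poissonMeasure r = (a + b * r) ^ 2 + b ^ 2 * r := by
  simpa [integral_poissonMeasure] using (hasSum_add_mul_sq_poissonMeasure r a b).tsum_eq

lemma tendsto_integral_scaled_poissonMeasure_div (f : ℝ →ᵇ ℝ) (j k : ℕ) {u : ℝ}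
    (hu : 0 ≤ u) :
    Tendsto (fun θ : ℝ => ∫ m : ℕ, f (θ * (j + k * m : ℕ)) ∂poissonMeasure (u / θ).toNNReal)
      (𝓝[>] 0) (𝓝 (f (k * u))) := by
  have haffine : ∀ θ : ℝ, ∀ m : ℕ,
      θ * ((j + k * m : ℕ) : ℝ) - k * u = (θ * j - k * u) + θ * k * m :=
    fun θ m => by push_cast; ring
  refine tendsto_integral_comp_of_tendsto_integral_sq_sub (fun _ => .of_discrete)
    (Eventually.of_forall fun θ => by simpa only [haffine] using
      integrable_add_mul_sq_poissonMeasure _ (θ * j - k * u) (θ * k)) ?_ f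
  -- for `θ > 0` the second moment of `θ (j + k m) - k u` is `θ² j² + θ k² u`
  have hmoment : Tendsto (fun θ : ℝ => θ ^ 2 * j ^ 2 + θ * (k ^ 2 * u)) (𝓝[>] 0) (𝓝 0) := by
    have : Continuous fun θ : ℝ => θ ^ 2 * j ^ 2 + θ * (k ^ 2 * u) := by fun_prop
    simpa using (this.tendsto 0).mono_left nhdsWithin_le_nhds
  refine hmoment.congr' ?_
  filter_upwards [self_mem_nhdsWithin] with θ (hθ : 0 < θ)
  simp only [haffine, integral_add_mul_sq_poissonMeasure, Real.coe_toNNReal _ (div_nonneg hu hθ.le)]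
  field_simp
  ring

variable {Ω : Type*} [MeasurableSpace Ω] {P : Measure Ω} [IsFiniteMeasure P]

lemma map_eq_map_comp_poissonKernel {X : Ω → ℕ} (hX : Measurable X) {ρ : Ω → ℝ≥0}
    (hρ : Measurable ρ) {j k : ℕ}
    (h : ∀ s ∈ Ioo (0 : ℝ) 1, ∫ ω, s ^ X ω ∂P = s ^ j * ∫ ω, Real.exp (ρ ω * (s ^ k - 1)) ∂P) :
    P.map X = ((poissonKernel.comap ρ hρ) ∘ₘ P).map (fun m => j + k * m) := by
  refine Measure.ext_of_integral_pow fun s hs => ?_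
  have hbdd : Integrable (fun m : ℕ => s ^ (j + k * m)) ((poissonKernel.comap ρ hρ) ∘ₘ P) :=
    .of_bound .of_discrete 1 (ae_of_all _ fun m => by
      rw [norm_pow, Real.norm_eq_abs, abs_of_pos hs.1]; exact pow_le_one₀ hs.1.le hs.2.le)
  rw [integral_map hX.aemeasurable .of_discrete, integral_map .of_discrete .of_discrete,
    Measure.integral_comp hbdd, h s hs, ← integral_const_mul]
  congr 1 with ω
  simp_rw [Kernel.comap_apply, poissonKernel_apply, pow_add, pow_mul]
  rw [integral_const_mul, integral_pow_poissonMeasure]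

lemma integral_comp_eq_of_integral_pow_eq {X : Ω → ℕ} (hX : Measurable X) {ρ : Ω → ℝ≥0}
    (hρ : Measurable ρ) {j k : ℕ}
    (h : ∀ s ∈ Ioo (0 : ℝ) 1, ∫ ω, s ^ X ω ∂P = s ^ j * ∫ ω, Real.exp (ρ ω * (s ^ k - 1)) ∂P)
    {g : ℕ → ℝ} {C : ℝ} (hg : ∀ n, ‖g n‖ ≤ C) :
    ∫ ω, g (X ω) ∂P = ∫ ω, ∫ m, g (j + k * m) ∂poissonMeasure (ρ ω) ∂P := by
  rw [← integral_map hX.aemeasurable .of_discrete, map_eq_map_comp_poissonKernel hX hρ h,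
    integral_map .of_discrete .of_discrete,
    Measure.integral_comp (.of_bound .of_discrete C (ae_of_all _ fun m => hg _))]
  rfl

end ProbabilityTheory

theorem theta_N_theta_tendsto_kU_general
    (Ω : Type*) [MeasurableSpace Ω] (P : Measure Ω) [IsProbabilityMeasure P]
    (U : Ω → ℝ) (hUmeas : Measurable U) (hUpos : ∀ᵐ ω ∂P, 0 ≤ U ω)
    (φ : ℝ → ℝ) (hφ : ∀ v : ℝ, 0 ≤ v → φ v = ∫ ω, Real.exp (-v * U ω) ∂P)
    (j k : ℕ)
    (N : ℝ → Ω → ℕ) (hNmeas : ∀ θ, Measurable (N θ))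
    (hN : ∀ θ : ℝ, 0 < θ → ∀ s ∈ Set.Ioo (0:ℝ) 1,
      ∫ ω, s ^ (N θ ω) ∂P = s ^ j * φ ((1 - s ^ k) / θ)) :
    ∀ f : BoundedContinuousFunction ℝ ℝ,
      Filter.Tendsto (fun θ : ℝ => ∫ ω, f (θ * (N θ ω : ℝ)) ∂P)
        (nhdsWithin 0 (Set.Ioi 0)) (nhds (∫ ω, f ((k : ℝ) * U ω) ∂P)) := by
  intro f
  have hρ (θ : ℝ) : Measurable fun ω => (U ω / θ).toNNReal := (hUmeas.div_const θ).real_toNNReal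
  have hmix (θ : ℝ) (hθ : 0 < θ) : ∫ ω, f (θ * N θ ω) ∂P
      = ∫ ω, ∫ m : ℕ, f (θ * (j + k * m : ℕ)) ∂poissonMeasure (U ω / θ).toNNReal ∂P := by
    refine integral_comp_eq_of_integral_pow_eq (hNmeas θ) (hρ θ) (fun s hs => ?_)
      (g := fun n : ℕ => f (θ * n)) fun n => f.norm_coe_le_norm _
    have hv : 0 ≤ (1 - s ^ k) / θ :=
      div_nonneg (sub_nonneg.2 (pow_le_one₀ hs.1.le hs.2.le)) hθ.le
    rw [hN θ hθ s hs, hφ _ hv]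
    congr 1
    refine integral_congr_ae (hUpos.mono fun ω hω => ?_)
    dsimp only
    rw [Real.coe_toNNReal _ (div_nonneg hω hθ.le)]
    ring_nf
  have hdom : Tendsto (fun θ => ∫ ω, ∫ m : ℕ, f (θ * (j + k * m : ℕ))
      ∂poissonMeasure (U ω / θ).toNNReal ∂P) (𝓝[>] 0) (𝓝 (∫ ω, f (k * U ω) ∂P)) :=
    tendsto_integral_filter_of_dominated_convergence (fun _ => ‖f‖)
      (.of_forall fun θ => (StronglyMeasurable.of_discrete.integral_kernel
        (κ := poissonKernel)).measurable.comp (hρ θ) |>.aestronglyMeasurable)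
      (.of_forall fun θ => ae_of_all _ fun ω => (norm_integral_le_of_norm_le_const
        (ae_of_all _ fun m => f.norm_coe_le_norm _)).trans_eq (by simp))
      (integrable_const _)
      (hUpos.mono fun ω hω => tendsto_integral_scaled_poissonMeasure_div f j k hω)
  refine hdom.congr' ?_
  filter_upwards [self_mem_nhdsWithin] with θ hθ using (hmix θ hθ).symm

/-- If `N_θ` has PGF `s ↦ s^j φ((1-s^k)/θ)` where `φ` is the Laplace transform of
`U ≥ 0`, then `θ·N_θ` converges in distribution to `k·U` as `θ → 0`. -/
theorem theta_N_theta_tendsto_kU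
    (Ω : Type*) [MeasurableSpace Ω] (P : Measure Ω) [IsProbabilityMeasure P]
    (U : Ω → ℝ) (hUmeas : Measurable U) (hUpos : ∀ᵐ ω ∂P, 0 ≤ U ω)
    (φ : ℝ → ℝ) (hφ : ∀ v : ℝ, 0 ≤ v → φ v = ∫ ω, Real.exp (-v * U ω) ∂P)
    (j k : ℕ) (hk : 1 ≤ k)
    (N : ℝ → Ω → ℕ) (hNmeas : ∀ θ, Measurable (N θ))
    (hN : ∀ θ : ℝ, 0 < θ → ∀ s ∈ Set.Ioo (0:ℝ) 1,
      ∫ ω, s ^ (N θ ω) ∂P = s ^ j * φ ((1 - s ^ k) / θ)) :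
    ∀ f : BoundedContinuousFunction ℝ ℝ,
      Filter.Tendsto (fun θ : ℝ => ∫ ω, f (θ * (N θ ω : ℝ)) ∂P)
        (nhdsWithin 0 (Set.Ioi 0)) (nhds (∫ ω, f ((k : ℝ) * U ω) ∂P)) :=
  theta_N_theta_tendsto_kU_general Ω P U hUmeas hUpos φ hφ j k N hNmeas hN
end

section
/- Suppose f and h are characteristic functions with f(t) ≠ 0 for all t, and for every 0 < c < 1 the function f_c(t) = f(t)/f(ct) is a characteristic function, and h(t) = φ(−log f(t)) where φ is a self-decomposable Laplace transform satisfying φ(s) = φ(cs)φ_c(s) and −log f(ct) = c^α(−log f(t)) for some 0 < α ≤ 2 (strict stability). Then for every 0 < c < 1, h(t)/h(c^{1/α} t) = φ_c(−log f(t)), which is a characteristic function; hence h is in class L. -/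
open MeasureTheory

/-- `f` is a characteristic function of a probability distribution on `ℝ`. -/
def IsCF (f : ℝ → ℂ) : Prop :=
  ∃ μ : Measure ℝ, IsProbabilityMeasure μ ∧
    ∀ t, f t = ∫ x, Complex.exp ((t:ℂ) * (x:ℂ) * Complex.I) ∂μ

/-- `φ` is the Laplace transform of a probability distribution on `[0,∞)`. -/
def IsLT (φ : ℂ → ℂ) : Prop :=
  ∃ μ : Measure ℝ, IsProbabilityMeasure μ ∧ μ (Set.Iio (0:ℝ)) = 0 ∧
    ∀ z : ℂ, 0 ≤ z.re → φ z = ∫ s, Complex.exp (-z * (s:ℂ)) ∂μ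

/-!
Strict stability gives `exp (-s · (-log f t)) = f (s^{1/α} t)` for `s ≥ 0`, so for any Laplace
transform `ψ` of a law `ν` on `[0, ∞)`, `ψ (-log f t)` is the characteristic function of
`S^{1/α} X` with `S ∼ ν` and `X ∼ f` independent. Substituting `-log f (c^{1/α} t) = c · (-log f t)`
into `φ(z) = φ(cz) φ_c(z)` gives the factorisation `h t = h (c^{1/α} t) · φ_c (-log f t)` with a
characteristic function as second factor, i.e. `h` is in class L. To divide by `h`, note that a
continuous class-L function with `h 0 ≠ 0` has no zeros: at a first zero `v` along a ray, the
factor `g = h / h (c ·)` vanishes at `v` but is close to `1` at `v / 2` when `c` is close to `1`,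
which contradicts `1 - Re g (2t) ≤ 4 (1 - Re g t)`, valid for every characteristic function.
-/

open Complex Filter Topology

lemma isCF_iff_exists_charFun {g : ℝ → ℂ} :
    IsCF g ↔ ∃ μ : Measure ℝ, IsProbabilityMeasure μ ∧ g = charFun μ := by
  simp only [IsCF, funext_iff, charFun_apply_real]

lemma one_sub_re_charFun (μ : Measure ℝ) [IsProbabilityMeasure μ] (t : ℝ) :
    1 - (charFun μ t).re = ∫ x, (1 - Real.cos (t * x)) ∂μ := by
  have hint : Integrable (fun x : ℝ => cexp (t * x * I)) μ :=
    .of_bound (by fun_prop) 1 (ae_of_all _ fun x => by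
      rw [← ofReal_mul, norm_exp_ofReal_mul_I])
  have hre : ∀ x : ℝ, (cexp (t * x * I)).re = Real.cos (t * x) := fun x => by
    rw [← ofReal_mul, exp_ofReal_mul_I_re]
  simp_rw [integral_sub (integrable_const 1) (hint.re.congr (ae_of_all _ hre)), ← hre,
    charFun_apply_real, ← RCLike.re_to_complex, integral_re hint]
  simp

lemma one_sub_re_charFun_two_mul_le (μ : Measure ℝ) [IsProbabilityMeasure μ] (t : ℝ) :
    1 - (charFun μ (2 * t)).re ≤ 4 * (1 - (charFun μ t).re) := by
  have hint : ∀ s : ℝ, Integrable (fun x : ℝ => 1 - Real.cos (s * x)) μ := fun s =>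
    .of_bound (by fun_prop) 2 (ae_of_all _ fun x => by
      rw [Real.norm_eq_abs, abs_le]
      constructor <;> linarith [Real.neg_one_le_cos (s * x), Real.cos_le_one (s * x)])
  rw [one_sub_re_charFun, one_sub_re_charFun, ← integral_const_mul]
  refine integral_mono (hint _) ((hint t).const_mul 4) fun x => ?_
  -- `4 (1 - cos θ) - (1 - cos 2θ) = 2 (1 - cos θ)²`
  have hcos := Real.cos_sq (t * x)
  rw [← mul_assoc] at hcos
  nlinarith [sq_nonneg (1 - Real.cos (t * x))]

lemma IsCF.one_sub_re_two_mul_le {g : ℝ → ℂ} (hg : IsCF g) (t : ℝ) :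
    1 - (g (2 * t)).re ≤ 4 * (1 - (g t).re) := by
  obtain ⟨μ, _, rfl⟩ := isCF_iff_exists_charFun.mp hg
  exact one_sub_re_charFun_two_mul_le μ t

lemma IsCF.norm_le_one {g : ℝ → ℂ} (hg : IsCF g) (t : ℝ) : ‖g t‖ ≤ 1 := by
  obtain ⟨μ, _, rfl⟩ := isCF_iff_exists_charFun.mp hg
  exact norm_charFun_le_one t

lemma IsCF.apply_zero {g : ℝ → ℂ} (hg : IsCF g) : g 0 = 1 := by
  obtain ⟨μ, _, rfl⟩ := isCF_iff_exists_charFun.mp hg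
  simp

lemma IsCF.continuous {g : ℝ → ℂ} (hg : IsCF g) : Continuous g := by
  obtain ⟨μ, _, rfl⟩ := isCF_iff_exists_charFun.mp hg
  exact continuous_charFun

lemma IsCF.re_neg_log_nonneg {g : ℝ → ℂ} (hg : IsCF g) (t : ℝ) : 0 ≤ (-Complex.log (g t)).re := by
  rw [neg_re, log_re, neg_nonneg]
  exact Real.log_nonpos (norm_nonneg _) (hg.norm_le_one t)

lemma exists_zero_forall_mul_ne_zero {h : ℝ → ℂ} (hc : Continuous h) (h0 : h 0 ≠ 0) {u : ℝ}
    (hu : h u = 0) : ∃ v, h v = 0 ∧ ∀ s ∈ Set.Ico (0 : ℝ) 1, h (s * v) ≠ 0 := by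
  set S := Set.Ici (0 : ℝ) ∩ {t | h (t * u) = 0}
  have hS : IsClosed S := isClosed_Ici.inter (isClosed_eq (by fun_prop) continuous_const)
  obtain ⟨hT0, hTu⟩ : 0 ≤ sInf S ∧ h (sInf S * u) = 0 :=
    hS.csInf_mem ⟨1, Set.mem_Ici.mpr zero_le_one, by simpa using hu⟩ ⟨0, fun _ ht => ht.1⟩
  refine ⟨sInf S * u, hTu, fun s ⟨hs0, hs1⟩ hsT => ?_⟩
  rw [← mul_assoc] at hsT
  have hle : sInf S ≤ s * sInf S := csInf_le ⟨0, fun _ ht => ht.1⟩ ⟨mul_nonneg hs0 hT0, hsT⟩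
  have hT : sInf S = 0 := by nlinarith
  simp [hT, h0] at hsT

def IsClassL (h : ℝ → ℂ) : Prop :=
  ∀ c : ℝ, 0 < c → c < 1 → ∃ g : ℝ → ℂ, IsCF g ∧ ∀ t, h t = h (c * t) * g t

lemma IsClassL.apply_ne_zero {h : ℝ → ℂ} (hL : IsClassL h) (hc : Continuous h) (h0 : h 0 ≠ 0)
    (u : ℝ) : h u ≠ 0 := by
  intro hu
  obtain ⟨v, hv, hne⟩ := exists_zero_forall_mul_ne_zero hc h0 hu
  set w := (1 / 2 : ℝ) * v
  have hw : h w ≠ 0 := hne _ ⟨by norm_num, by norm_num⟩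
  have hratio : Tendsto (fun c : ℝ => h w / h (c * w)) (𝓝[<] 1) (𝓝 1) := by
    have hcont : ContinuousAt (fun c : ℝ => h w / h (c * w)) 1 :=
      continuousAt_const.div (by fun_prop) (by simpa using hw)
    simpa [div_self hw] using hcont.tendsto.mono_left nhdsWithin_le_nhds
  obtain ⟨c, ⟨hc0, hc1⟩, hclose⟩ := (Filter.Eventually.and (Ioo_mem_nhdsLT zero_lt_one)
    (hratio.eventually (Metric.ball_mem_nhds 1 (by norm_num : (0 : ℝ) < 1 / 4)))).exists
  obtain ⟨g, hg, hfac⟩ := hL c hc0 hc1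
  have hgv : g v = 0 := by
    have := hfac v
    rw [hv, eq_comm, mul_eq_zero] at this
    exact this.resolve_left (hne c ⟨hc0.le, hc1⟩)
  have hgw : g w = h w / h (c * w) := by
    have hcw : h (c * w) ≠ 0 := by
      convert hne (c / 2) ⟨by positivity, by linarith⟩ using 2
      ring
    rw [eq_div_iff hcw, mul_comm, ← hfac]
  have hre : 3 / 4 < (g w).re := by
    rw [dist_eq_norm, ← hgw] at hclose
    have := (abs_le.mp (Complex.abs_re_le_norm (g w - 1))).1
    rw [sub_re, one_re] at this
    linarith
  have := hg.one_sub_re_two_mul_le w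
  rw [show 2 * w = v by ring, hgv, zero_re, sub_zero] at this
  linarith

def IsStrictlyStable (α : ℝ) (f : ℝ → ℂ) : Prop :=
  ∀ b : ℝ, 0 < b → ∀ t : ℝ, -Complex.log (f (b * t)) = ((b ^ α : ℝ) : ℂ) * (-Complex.log (f t))

lemma IsStrictlyStable.exp_mul_log {α : ℝ} {f : ℝ → ℂ} (hst : IsStrictlyStable α f)
    (hα : α ≠ 0) (hf0 : f 0 = 1) (hfne : ∀ t, f t ≠ 0) {s : ℝ} (hs : 0 ≤ s) (t : ℝ) :
    cexp (s * Complex.log (f t)) = f (s ^ (1 / α) * t) := by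
  rw [one_div]
  rcases hs.eq_or_lt with rfl | hs
  · simp [Real.zero_rpow (inv_ne_zero hα), hf0]
  · have hlog := hst (s ^ α⁻¹) (by positivity) t
    rw [Real.rpow_inv_rpow hs.le hα, mul_neg, neg_inj] at hlog
    rw [← hlog, exp_log (hfne _)]

lemma charFun_map_mul_prod (ν μ : Measure ℝ) [IsProbabilityMeasure ν] [IsProbabilityMeasure μ]
    {a : ℝ → ℝ} (ha : Measurable a) (t : ℝ) :
    charFun ((ν.prod μ).map fun p => a p.1 * p.2) t = ∫ s, charFun μ (a s * t) ∂ν := by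
  have hint : Integrable (fun p : ℝ × ℝ => cexp (t * ↑(a p.1 * p.2) * I)) (ν.prod μ) :=
    .of_bound (by fun_prop) 1 (ae_of_all _ fun p => by
      rw [← ofReal_mul, norm_exp_ofReal_mul_I])
  rw [charFun_apply_real, integral_map (by fun_prop) (by fun_prop), integral_prod _ hint]
  refine integral_congr_ae (ae_of_all _ fun s => ?_)
  dsimp only
  rw [charFun_apply_real]
  refine integral_congr_ae (ae_of_all _ fun x => ?_)
  push_cast
  ring_nf

lemma IsCF.isCF_comp_neg_log {α : ℝ} {f : ℝ → ℂ} (hf : IsCF f) (hfne : ∀ t, f t ≠ 0)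
    (hst : IsStrictlyStable α f) (hα : α ≠ 0) {ψ : ℂ → ℂ} (hψ : IsLT ψ) :
    IsCF fun t => ψ (-Complex.log (f t)) := by
  obtain ⟨μ, _, rfl⟩ := isCF_iff_exists_charFun.mp hf
  obtain ⟨ν, _, hν0, hψν⟩ := hψ
  have hroot : Measurable fun s : ℝ => s ^ (1 / α) := by fun_prop
  refine isCF_iff_exists_charFun.mpr ⟨(ν.prod μ).map fun p => p.1 ^ (1 / α) * p.2,
    Measure.isProbabilityMeasure_map (by fun_prop), funext fun t => ?_⟩
  rw [charFun_map_mul_prod ν μ hroot, hψν _ (hf.re_neg_log_nonneg t)]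
  refine integral_congr_ae ?_
  filter_upwards [measure_eq_zero_iff_ae_notMem.mp hν0] with s hs
  rw [neg_neg, mul_comm, hst.exp_mul_log hα hf.apply_zero hfne (not_lt.mp hs)]

theorem phi_mixture_selfdecomposable_structure_general
    (α : ℝ) (hα : 0 < α ∧ α ≤ 2)
    (f : ℝ → ℂ) (hfCF : IsCF f) (hfne : ∀ t, f t ≠ 0)
    (hss : ∀ b : ℝ, 0 < b → ∀ t : ℝ,
      -Complex.log (f (b * t)) = ((b ^ α : ℝ) : ℂ) * (-Complex.log (f t)))
    (φ : ℂ → ℂ) (hφ : IsLT φ)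
    (φc : ℝ → ℂ → ℂ)
    (hsd : ∀ c : ℝ, 0 < c → c < 1 → IsLT (φc c) ∧
      ∀ z : ℂ, 0 ≤ z.re → φ z = φ ((c:ℂ) * z) * φc c z)
    (h : ℝ → ℂ) (hh : ∀ t, h t = φ (-Complex.log (f t))) :
    (∀ c : ℝ, 0 < c → c < 1 →
      (∀ t : ℝ, h t / h (c ^ (1/α) * t) = φc c (-Complex.log (f t))) ∧
      IsCF (fun t => φc c (-Complex.log (f t)))) ∧
    (∀ c' : ℝ, 0 < c' → c' < 1 → ∃ hc : ℝ → ℂ, IsCF hc ∧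
      ∀ t : ℝ, h t = h (c' * t) * hc t) := by
  have hα0 : α ≠ 0 := hα.1.ne'
  have hmix {ψ : ℂ → ℂ} (hψ : IsLT ψ) : IsCF fun t => ψ (-Complex.log (f t)) :=
    hfCF.isCF_comp_neg_log hfne hss hα0 hψ
  have hsdα (b : ℝ) (hb0 : 0 < b) (hb1 : b < 1) :=
    hsd (b ^ α) (by positivity) (Real.rpow_lt_one hb0.le hb1 hα.1)
  have hfactor (b : ℝ) (hb0 : 0 < b) (hb1 : b < 1) (t : ℝ) :
      h t = h (b * t) * φc (b ^ α) (-Complex.log (f t)) := by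
    rw [hh, hh, hss b hb0]
    exact (hsdα b hb0 hb1).2 _ (hfCF.re_neg_log_nonneg t)
  have hL : IsClassL h := fun b hb0 hb1 => ⟨_, hmix (hsdα b hb0 hb1).1, hfactor b hb0 hb1⟩
  have hhCF : IsCF h := funext hh ▸ hmix hφ
  refine ⟨fun c hc0 hc1 => ⟨fun t => ?_, hmix (hsd c hc0 hc1).1⟩, hL⟩
  have hroot : (c ^ (1 / α)) ^ α = c := by rw [one_div, Real.rpow_inv_rpow hc0.le hα0]
  have hroot1 : c ^ (1 / α) < 1 := Real.rpow_lt_one hc0.le hc1 (one_div_pos.mpr hα.1)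
  rw [div_eq_iff (hL.apply_ne_zero hhCF.continuous (by simp [hhCF.apply_zero]) _),
    hfactor _ (by positivity) hroot1 t, hroot, mul_comm]

/-- If `f` is a strictly stable CF in class L and `φ` is a self-decomposable LT with
components `φ_c`, then `h = φ(-log f)` satisfies `h(t)/h(c^{1/α}t) = φ_c(-log f(t))`,
a characteristic function; hence `h` is in class L. -/
theorem phi_mixture_selfdecomposable_structure
    (α : ℝ) (hα : 0 < α ∧ α ≤ 2)
    (f : ℝ → ℂ) (hfCF : IsCF f) (hfne : ∀ t, f t ≠ 0)
    (hfL : ∀ c : ℝ, 0 < c → c < 1 → IsCF (fun t => f t / f (c * t)))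
    (hss : ∀ b : ℝ, 0 < b → ∀ t : ℝ,
      -Complex.log (f (b * t)) = ((b ^ α : ℝ) : ℂ) * (-Complex.log (f t)))
    (φ : ℂ → ℂ) (hφ : IsLT φ)
    (φc : ℝ → ℂ → ℂ)
    (hsd : ∀ c : ℝ, 0 < c → c < 1 → IsLT (φc c) ∧
      ∀ z : ℂ, 0 ≤ z.re → φ z = φ ((c:ℂ) * z) * φc c z)
    (h : ℝ → ℂ) (hh : ∀ t, h t = φ (-Complex.log (f t))) :
    (∀ c : ℝ, 0 < c → c < 1 →
      (∀ t : ℝ, h t / h (c ^ (1/α) * t) = φc c (-Complex.log (f t))) ∧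
      IsCF (fun t => φc c (-Complex.log (f t)))) ∧
    (∀ c' : ℝ, 0 < c' → c' < 1 → ∃ hc : ℝ → ℂ, IsCF hc ∧
      ∀ t : ℝ, h t = h (c' * t) * hc t) :=
  phi_mixture_selfdecomposable_structure_general α hα f hfCF hfne hss φ hφ φc hsd h hh
end
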